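/- arXiv:1706.09345 — 2 statements merged into one kernel-verified Lean document; each statement's English description precedes it below -/
import Mathlib

section
/- Let N ≥ 1, let Φ ∈ L¹(ℝ^N) be nonnegative and even, and let f(λ) = ∫_{ℝ^N} cos(⟨λ, θ⟩) Φ(θ) dθ be its (real) Fourier transform. Let γ be a centered Gaussian probability measure on ℝ^N. Then for every a ∈ ℝ^N, ∫_{ℝ^N} f(a + λ) γ(dλ) ≤ ∫_{ℝ^N} f(λ) γ(dλ); that is, the Gaussian average of a positive definite function, shifted by a, is maximized at a = 0. -/
open MeasureTheory ProbabilityTheory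
open scoped RealInnerProductSpace NNReal

/-!
Write `f(λ) = ∫ cos⟪λ, θ⟫ Φ(θ) dθ` and integrate in `λ` first (Fubini). For fixed `θ`,
`∫ cos⟪a + λ, θ⟫ dγ(λ) = Re (e^{i⟪a, θ⟫} φ(θ))`, where `φ` is the characteristic function of `γ`.
Since `⟪·, θ⟫` has law `N(0, v)` under `γ`, `φ(θ) = exp (-v/2)` is a nonnegative real, so this
is `cos⟪a, θ⟫ φ(θ) ≤ φ(θ)`, the value at `a = 0`. Integrating against `Φ ≥ 0` gives the claim.
-/

open Complex
open scoped ComplexOrder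

section CharFun

variable {E : Type*} [NormedAddCommGroup E] [InnerProductSpace ℝ E]
  [MeasurableSpace E] [BorelSpace E]

lemma charFun_eq_charFun_map_innerSL (μ : Measure E) (t : E) :
    charFun μ t = charFun (μ.map (innerSL ℝ t)) 1 := by
  rw [charFun_eq_charFunDual_toDualMap, charFunDual_eq_charFun_map_one]
  rfl

lemma charFun_eq_exp_of_map_innerSL_eq_gaussianReal {μ : Measure E} {t : E} {v : ℝ≥0}
    (h : μ.map (innerSL ℝ t) = gaussianReal 0 v) :
    charFun μ t = Real.exp (-(v / 2)) := by
  rw [charFun_eq_charFun_map_innerSL, h, charFun_gaussianReal]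
  push_cast
  ring_nf

lemma integral_cos_inner_eq_re_charFun (μ : Measure E) [IsFiniteMeasure μ] (t : E) :
    ∫ x, Real.cos ⟪x, t⟫ ∂μ = (charFun μ t).re := by
  have hint : Integrable (fun x ↦ cexp (⟪x, t⟫ * I)) μ :=
    (integrable_const (1 : ℝ)).mono' (by fun_prop)
      (ae_of_all _ fun x ↦ by simp [norm_exp_ofReal_mul_I])
  rw [charFun_apply, ← RCLike.re_eq_complex_re, ← integral_re hint]
  simp_rw [RCLike.re_eq_complex_re, exp_ofReal_mul_I_re]

lemma integral_cos_inner_const_add_eq_re (μ : Measure E) [IsFiniteMeasure μ] (r t : E) :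
    ∫ x, Real.cos ⟪r + x, t⟫ ∂μ = (charFun μ t * cexp (⟪r, t⟫ * I)).re := by
  rw [← charFun_map_const_add, ← integral_cos_inner_eq_re_charFun,
    integral_map (by fun_prop) (by fun_prop)]

lemma integral_cos_inner_const_add_le {μ : Measure E} [IsFiniteMeasure μ] {t : E}
    (ht : 0 ≤ charFun μ t) (r : E) :
    ∫ x, Real.cos ⟪r + x, t⟫ ∂μ ≤ ∫ x, Real.cos ⟪x, t⟫ ∂μ := by
  obtain ⟨hre, him⟩ := Complex.nonneg_iff.mp ht
  rw [integral_cos_inner_const_add_eq_re, integral_cos_inner_eq_re_charFun, mul_re,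
    exp_ofReal_mul_I_re, exp_ofReal_mul_I_im, ← him, zero_mul, sub_zero]
  exact mul_le_of_le_one_right hre (Real.cos_le_one _)

end CharFun

section Fubini

variable {E : Type*} [NormedAddCommGroup E] [InnerProductSpace ℝ E]
  [MeasurableSpace E] [BorelSpace E] [SecondCountableTopology E]
  {μ ν : Measure E} [IsFiniteMeasure μ] [SFinite ν] {Φ : E → ℝ}

lemma integrable_cos_inner_const_add_mul_prod (hΦ : Integrable Φ ν) (a : E) :
    Integrable (fun p : E × E ↦ Real.cos ⟪a + p.1, p.2⟫ * Φ p.2) (μ.prod ν) :=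
  (hΦ.comp_snd μ).bdd_mul (c := 1) (by fun_prop)
    (ae_of_all _ fun _ ↦ by simpa using Real.abs_cos_le_one _)

lemma integral_integral_cos_inner_const_add_mul_swap (hΦ : Integrable Φ ν) (a : E) :
    ∫ x, ∫ θ, Real.cos ⟪a + x, θ⟫ * Φ θ ∂ν ∂μ
      = ∫ θ, (∫ x, Real.cos ⟪a + x, θ⟫ ∂μ) * Φ θ ∂ν := by
  rw [integral_integral_swap (by exact integrable_cos_inner_const_add_mul_prod hΦ a)]
  simp_rw [integral_mul_const]

lemma integrable_integral_cos_inner_const_add_mul (hΦ : Integrable Φ ν) (a : E) :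
    Integrable (fun θ ↦ (∫ x, Real.cos ⟪a + x, θ⟫ ∂μ) * Φ θ) ν := by
  simpa only [integral_mul_const] using
    (integrable_cos_inner_const_add_mul_prod (μ := μ) hΦ a).integral_prod_right

theorem integral_integral_cos_inner_const_add_mul_le (hΦ : Integrable Φ ν)
    (hΦ_nonneg : 0 ≤ᵐ[ν] Φ) (hμ : ∀ t, 0 ≤ charFun μ t) (a : E) :
    ∫ x, ∫ θ, Real.cos ⟪a + x, θ⟫ * Φ θ ∂ν ∂μ ≤ ∫ x, ∫ θ, Real.cos ⟪x, θ⟫ * Φ θ ∂ν ∂μ := by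
  have hint_zero : Integrable (fun θ ↦ (∫ x, Real.cos ⟪x, θ⟫ ∂μ) * Φ θ) ν := by
    simpa only [zero_add] using integrable_integral_cos_inner_const_add_mul (μ := μ) hΦ 0
  have hswap_zero : ∫ x, ∫ θ, Real.cos ⟪x, θ⟫ * Φ θ ∂ν ∂μ
      = ∫ θ, (∫ x, Real.cos ⟪x, θ⟫ ∂μ) * Φ θ ∂ν := by
    simpa only [zero_add] using integral_integral_cos_inner_const_add_mul_swap (μ := μ) hΦ 0
  rw [integral_integral_cos_inner_const_add_mul_swap hΦ a, hswap_zero]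
  refine integral_mono_ae (integrable_integral_cos_inner_const_add_mul hΦ a) hint_zero ?_
  filter_upwards [hΦ_nonneg] with θ hθ
  exact mul_le_mul_of_nonneg_right (integral_cos_inner_const_add_le (hμ θ) a) hθ

end Fubini

theorem gaussian_average_pos_def_max_general
    (N : ℕ)
    (Φ : EuclideanSpace ℝ (Fin N) → ℝ)
    (hΦ_int : Integrable Φ (volume : Measure (EuclideanSpace ℝ (Fin N))))
    (hΦ_nonneg : ∀ θ, 0 ≤ Φ θ)
    (γ : Measure (EuclideanSpace ℝ (Fin N))) [IsProbabilityMeasure γ]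
    (hγ : ∀ l : EuclideanSpace ℝ (Fin N) →L[ℝ] ℝ, ∃ v : ℝ≥0,
      γ.map l = gaussianReal 0 v) :
    ∀ a : EuclideanSpace ℝ (Fin N),
      (∫ lam, (∫ θ, Real.cos ⟪a + lam, θ⟫ * Φ θ) ∂γ) ≤
        ∫ lam, (∫ θ, Real.cos ⟪lam, θ⟫ * Φ θ) ∂γ := by
  have hγ_charFun : ∀ θ, 0 ≤ charFun γ θ := fun θ ↦ by
    obtain ⟨v, hv⟩ := hγ (innerSL ℝ θ)
    rw [charFun_eq_exp_of_map_innerSL_eq_gaussianReal hv]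
    exact_mod_cast (Real.exp_pos _).le
  exact integral_integral_cos_inner_const_add_mul_le hΦ_int (ae_of_all _ hΦ_nonneg) hγ_charFun

/-- The Gaussian average of a (shifted) positive definite function is maximized at
zero shift: if `f(λ) = ∫ cos⟪λ,θ⟫ Φ(θ) dθ` with `Φ ∈ L¹` nonnegative and even, and
`γ` is a centered Gaussian probability measure on `ℝ^N` (i.e. every continuous
linear functional has a centered Gaussian law), then
`∫ f(a + λ) dγ(λ) ≤ ∫ f(λ) dγ(λ)` for every `a`. -/
theorem gaussian_average_pos_def_max
    (N : ℕ) (hN : 1 ≤ N)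
    (Φ : EuclideanSpace ℝ (Fin N) → ℝ)
    (hΦ_int : Integrable Φ (volume : Measure (EuclideanSpace ℝ (Fin N))))
    (hΦ_nonneg : ∀ θ, 0 ≤ Φ θ) (hΦ_even : ∀ θ, Φ (-θ) = Φ θ)
    (γ : Measure (EuclideanSpace ℝ (Fin N))) [IsProbabilityMeasure γ]
    (hγ : ∀ l : EuclideanSpace ℝ (Fin N) →L[ℝ] ℝ, ∃ v : ℝ≥0,
      γ.map l = gaussianReal 0 v) :
    ∀ a : EuclideanSpace ℝ (Fin N),
      (∫ lam, (∫ θ, Real.cos ⟪a + lam, θ⟫ * Φ θ) ∂γ) ≤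
        ∫ lam, (∫ θ, Real.cos ⟪lam, θ⟫ * Φ θ) ∂γ :=
  gaussian_average_pos_def_max_general N Φ hΦ_int hΦ_nonneg γ hγ
end

section
/- Let p > 0 and let x₁, x₂, y ∈ ℝ^d with y ≠ x₁ and y ≠ x₂. Then | |y−x₁|^{-p} − |y−x₂|^{-p} | ≤ p · |x₁ − x₂| · ( 1/(|y−x₁|^p |y−x₂|) + 1/(|y−x₁| |y−x₂|^p) ). -/
/-!
By the mean value theorem, `b ^ p - a ^ p = p c ^ (p - 1) (b - a)` for some `c` between `a` and
`b`, and `c ^ (p - 1)` is at most `a ^ (p - 1) + b ^ (p - 1)` whatever the sign of `p - 1`.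
Dividing by `a ^ p b ^ p` bounds `a ^ (-p) - b ^ (-p)`, and the reverse triangle inequality
`|‖y - x₁‖ - ‖y - x₂‖| ≤ ‖x₁ - x₂‖` finishes the proof.
-/

open Set

namespace Real

lemma rpow_le_rpow_add_rpow_of_mem_Icc {a b c q : ℝ} (ha : 0 < a) (hc : c ∈ Icc a b) :
    c ^ q ≤ a ^ q + b ^ q := by
  have hc₀ : 0 < c := ha.trans_le hc.1
  rcases le_total 0 q with hq | hq
  · have := rpow_le_rpow hc₀.le hc.2 hq
    linarith [rpow_pos_of_pos ha q]
  · have := rpow_le_rpow_of_nonpos ha hc.1 hq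
    linarith [rpow_pos_of_pos (hc₀.trans_le hc.2) q]

lemma rpow_sub_rpow_le_mul_sub_mul_add {a b p : ℝ} (hp : 0 ≤ p) (ha : 0 < a) (hab : a ≤ b) :
    b ^ p - a ^ p ≤ p * (b - a) * (a ^ (p - 1) + b ^ (p - 1)) := by
  rcases hab.eq_or_lt with rfl | hab
  · simp
  obtain ⟨c, hc, hslope⟩ := exists_hasDerivAt_eq_slope (fun t ↦ t ^ p) (fun t ↦ p * t ^ (p - 1))
    hab (continuousOn_id.rpow_const fun x hx ↦ Or.inl (ha.trans_le hx.1).ne')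
    fun x hx ↦ hasDerivAt_rpow_const (Or.inl (ha.trans hx.1).ne')
  have hmvt : b ^ p - a ^ p = p * c ^ (p - 1) * (b - a) := by
    rw [hslope, div_mul_cancel₀ _ (sub_pos.mpr hab).ne']
  rw [hmvt, mul_right_comm]
  gcongr
  exact rpow_le_rpow_add_rpow_of_mem_Icc ha (Ioo_subset_Icc_self hc)

lemma rpow_neg_sub_rpow_neg_le {a b p : ℝ} (hp : 0 ≤ p) (ha : 0 < a) (hab : a ≤ b) :
    a ^ (-p) - b ^ (-p) ≤ p * (b - a) * (1 / (a ^ p * b) + 1 / (a * b ^ p)) := by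
  have hb : 0 < b := ha.trans_le hab
  have hap : 0 < a ^ p := rpow_pos_of_pos ha p
  have hbp : 0 < b ^ p := rpow_pos_of_pos hb p
  have hneg : a ^ (-p) - b ^ (-p) = (b ^ p - a ^ p) / (a ^ p * b ^ p) := by
    rw [rpow_neg ha.le, rpow_neg hb.le]
    field_simp
  have hsum : (a ^ (p - 1) + b ^ (p - 1)) / (a ^ p * b ^ p) = 1 / (a ^ p * b) + 1 / (a * b ^ p) := by
    rw [rpow_sub_one ha.ne', rpow_sub_one hb.ne']
    field_simp
    ring
  rw [hneg, ← hsum, ← mul_div_assoc]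
  gcongr
  exact rpow_sub_rpow_le_mul_sub_mul_add hp ha hab

lemma abs_rpow_neg_sub_rpow_neg_le {a b p : ℝ} (hp : 0 ≤ p) (ha : 0 < a) (hb : 0 < b) :
    |a ^ (-p) - b ^ (-p)| ≤ p * |a - b| * (1 / (a ^ p * b) + 1 / (a * b ^ p)) := by
  wlog hab : a ≤ b generalizing a b
  · have := this hb ha (le_of_not_ge hab)
    rwa [abs_sub_comm, abs_sub_comm b, add_comm, mul_comm b, mul_comm (b ^ p)] at this
  have hanti : b ^ (-p) ≤ a ^ (-p) := rpow_le_rpow_of_nonpos ha hab (neg_nonpos.mpr hp)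
  rw [abs_of_nonneg (sub_nonneg.mpr hanti), abs_sub_comm, abs_of_nonneg (sub_nonneg.mpr hab)]
  exact rpow_neg_sub_rpow_neg_le hp ha hab

end Real

/-- Difference bound for Riesz potentials: for `p > 0` and `y ≠ x₁`, `y ≠ x₂`,
`| |y-x₁|^{-p} - |y-x₂|^{-p} | ≤ p |x₁-x₂| (|y-x₁|^{-p}|y-x₂|^{-1} + |y-x₁|^{-1}|y-x₂|^{-p})`. -/
theorem riesz_potential_difference_bound
    (d : ℕ) (p : ℝ) (hp : 0 < p)
    (x₁ x₂ y : EuclideanSpace ℝ (Fin d)) (h₁ : y ≠ x₁) (h₂ : y ≠ x₂) :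
    |‖y - x₁‖ ^ (-p) - ‖y - x₂‖ ^ (-p)| ≤
      p * ‖x₁ - x₂‖ *
        (1 / (‖y - x₁‖ ^ p * ‖y - x₂‖) + 1 / (‖y - x₁‖ * ‖y - x₂‖ ^ p)) := by
  have ha : 0 < ‖y - x₁‖ := norm_pos_iff.mpr (sub_ne_zero.mpr h₁)
  have hb : 0 < ‖y - x₂‖ := norm_pos_iff.mpr (sub_ne_zero.mpr h₂)
  have hdist : |‖y - x₁‖ - ‖y - x₂‖| ≤ ‖x₁ - x₂‖ := by
    simpa [norm_sub_rev x₂ x₁] using abs_norm_sub_norm_le (y - x₁) (y - x₂)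
  refine (Real.abs_rpow_neg_sub_rpow_neg_le hp.le ha hb).trans ?_
  gcongr
end
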